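/- Under the additional hypotheses max_{1≤j≤N} (‖b_j‖∞ + ‖c_j‖∞) < 1 and max_{1≤j≤N} (‖d_j‖∞ + ‖e_j‖∞) < 1, the graph G(f_1) = {(t, f_1(t)) : t ∈ I} of the Edelstein hidden variable fractal interpolation function has upper box-counting dimension at most 2 − α, where α ∈ (0, 1] is the Hölder exponent of f_1 obtained from the smoothness theorem: limsup_{ε → 0⁺} (log N_ε)/(−log ε) ≤ 2 − α, with N_ε the number of ε-mesh squares of ℝ² intersecting G(f_1). -/

import Mathlib

/-!
The self-affinity `f ∘ L_j = F_j(·, f)` makes `f` Hölder. Measuring the oscillation of `f` in the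
max-norm of `ℝ²`, the hypotheses `‖b_j‖∞ + ‖c_j‖∞ ≤ γ < 1` and `‖d_j‖∞ + ‖e_j‖∞ ≤ γ < 1` turn the
functional equation into `dist (f (L_j u)) (f (L_j z)) ≤ γ dist (f u) (f z) + K |u - z|`, while
`L_j` scales distances by its slope `a_j ≥ κ := min a_j`. Pulling a pair of points back through
the `L_j` (through two of them, with the shared knot as intermediate point, when the pair straddles
a knot) gives `dist (f x) (f y) ≤ M ρ ^ n` once `|x - y| ≤ κ ^ n Δ`, where `Δ` is the smallest
knot gap and `ρ ∈ [κ, 1)`, hence Hölder continuity with exponent `α = log ρ / log κ`. An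
`α`-Hölder graph meets `O(ε⁻¹)` columns of the `ε`-mesh and `O(ε ^ (α - 1))` squares in each,
so `N_ε = O(ε ^ (α - 2))`.
-/

/-- The number of `ε`-mesh squares `[mε,(m+1)ε] × [nε,(n+1)ε]` of `ℝ²` that
intersect a set `G ⊆ ℝ²`. -/
noncomputable def meshCount (G : Set (ℝ × ℝ)) (ε : ℝ) : ℕ :=
  {mn : ℤ × ℤ | ((Set.Icc ((mn.1 : ℝ) * ε) (((mn.1 : ℝ) + 1) * ε) ×ˢ
      Set.Icc ((mn.2 : ℝ) * ε) (((mn.2 : ℝ) + 1) * ε)) ∩ G).Nonempty}.ncard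

open Set Filter Real Bornology Topology
open scoped NNReal

theorem exists_dist_le_mul_rpow_of_dist_le_pow {X Y : Type*} [MetricSpace X]
    [PseudoMetricSpace Y] {f : X → Y} {s : Set X} {M Δ κ ρ : ℝ} (hΔ : 0 < Δ) (hκ : 0 < κ)
    (hκρ : κ ≤ ρ) (hρ : ρ < 1) (hM : ∀ x ∈ s, ∀ y ∈ s, dist (f x) (f y) ≤ M)
    (hpow : ∀ n : ℕ, ∀ x ∈ s, ∀ y ∈ s, dist x y ≤ κ ^ n * Δ → dist (f x) (f y) ≤ M * ρ ^ n) :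
    ∃ α : ℝ, 0 < α ∧ α ≤ 1 ∧ ∃ C : ℝ, 0 < C ∧ ∀ x ∈ s, ∀ y ∈ s,
      dist (f x) (f y) ≤ C * dist x y ^ α := by
  have hκ1 : κ < 1 := hκρ.trans_lt hρ
  have hρ0 : 0 < ρ := hκ.trans_le hκρ
  set α := logb κ ρ
  have hα : 0 < α := logb_pos_of_base_lt_one hκ hκ1 hρ0 hρ
  have hα1 : α ≤ 1 := by
    rw [← (logb_self_eq_one_iff (b := κ)).2 ⟨hκ.ne', hκ1.ne, by linarith⟩]
    exact (logb_le_logb_of_base_lt_one hκ hκ1 hρ0 hκ).2 hκρ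
  refine ⟨α, hα, hα1, max M 0 * (κ * Δ) ^ (-α) + 1, by positivity, fun x hx y hy => ?_⟩
  suffices H : dist (f x) (f y) ≤ M * (κ * Δ) ^ (-α) * dist x y ^ α by
    refine H.trans (mul_le_mul_of_nonneg_right ?_ (by positivity))
    nlinarith [le_max_left M 0, rpow_nonneg (mul_pos hκ hΔ).le (-α)]
  have hM0 : 0 ≤ M := dist_nonneg.trans (hM x hx x hx)
  rcases eq_or_ne x y with rfl | hxy
  · simp [zero_rpow hα.ne']
  have hd : 0 < dist x y := dist_pos.2 hxy
  -- the bound `M ρ ^ n` is good enough at the first scale `κ ^ (n + 1) * Δ` below `dist x y`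
  have key : ∀ n : ℕ, κ ^ (n + 1) * Δ < dist x y →
      M * ρ ^ n ≤ M * (κ * Δ) ^ (-α) * dist x y ^ α := by
    intro n hn
    have hpow_eq : (κ ^ (n + 1) * Δ) ^ α = ρ ^ n * (κ * Δ) ^ α := by
      rw [pow_succ, mul_assoc, mul_rpow (by positivity) (by positivity), ← rpow_pow_comm hκ.le,
        rpow_logb hκ hκ1.ne hρ0]
    have hρn : ρ ^ n = (κ ^ (n + 1) * Δ) ^ α * (κ * Δ) ^ (-α) := by
      rw [hpow_eq, rpow_neg (by positivity), mul_assoc, mul_inv_cancel₀ (by positivity), mul_one]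
    rw [hρn, mul_comm _ ((κ * Δ) ^ (-α)), mul_assoc]
    gcongr
  rcases le_or_gt (dist x y) Δ with hle | hlt
  · obtain ⟨n, hn1, hn2⟩ := exists_nat_pow_near_of_lt_one (div_pos hd hΔ)
      ((div_le_one hΔ).2 hle) hκ hκ1
    exact (hpow n x hx y hy ((div_le_iff₀ hΔ).1 hn2)).trans (key n ((lt_div_iff₀ hΔ).1 hn1))
  · refine (hM x hx y hy).trans ?_
    simpa using key 0 (by rw [zero_add, pow_one]; nlinarith)

theorem Finset.exists_nonneg_forall_of_monotone {ι : Type*} (s : Finset ι) {P : ι → ℝ → Prop}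
    (hP : ∀ j ∈ s, Monotone (P j)) (h : ∀ j ∈ s, ∃ K, P j K) : ∃ K, 0 ≤ K ∧ ∀ j ∈ s, P j K := by
  have hev : ∀ᶠ K in atTop, ∀ j ∈ s, P j K := (eventually_all_finset s).2 fun j hj => by
    obtain ⟨K, hK⟩ := h j hj
    filter_upwards [eventually_ge_atTop K] with K' hK' using hP j hj hK' hK
  exact ((eventually_ge_atTop 0).and hev).exists

structure IsAffineIFS (N : ℕ) (t a c : ℕ → ℝ) (L : ℕ → ℝ → ℝ) : Prop where
  pos : 0 < N
  lt_succ : ∀ j < N, t j < t (j + 1)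
  eq_affine : ∀ j, 1 ≤ j → j ≤ N → ∀ x, L j x = a j * x + c j
  slope_lt_one : ∀ j, 1 ≤ j → j ≤ N → a j < 1
  map_left : ∀ j, 1 ≤ j → j ≤ N → L j (t 0) = t (j - 1)
  map_right : ∀ j, 1 ≤ j → j ≤ N → L j (t N) = t j

namespace IsAffineIFS

variable {N : ℕ} {t a c : ℕ → ℝ} {L : ℕ → ℝ → ℝ}

theorem strictMonoOn (h : IsAffineIFS N t a c L) : StrictMonoOn t (Iic N) :=
  strictMonoOn_Iic_of_lt_succ fun j hj => by simpa using h.lt_succ j hj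

theorem knot_pred_lt (h : IsAffineIFS N t a c L) {j : ℕ} (hj1 : 1 ≤ j) (hjN : j ≤ N) :
    t (j - 1) < t j :=
  h.strictMonoOn (mem_Iic.2 (by omega)) (mem_Iic.2 hjN) (by omega)

theorem knot_mem_Icc (h : IsAffineIFS N t a c L) {j : ℕ} (hj : j ≤ N) : t j ∈ Icc (t 0) (t N) :=
  ⟨h.strictMonoOn.monotoneOn (mem_Iic.2 (Nat.zero_le _)) (mem_Iic.2 hj) (Nat.zero_le _),
    h.strictMonoOn.monotoneOn (mem_Iic.2 hj) (mem_Iic.2 le_rfl) hj⟩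

theorem slope_mul (h : IsAffineIFS N t a c L) {j : ℕ} (hj1 : 1 ≤ j) (hjN : j ≤ N) :
    a j * (t N - t 0) = t j - t (j - 1) := by
  rw [← h.map_right j hj1 hjN, ← h.map_left j hj1 hjN, h.eq_affine j hj1 hjN,
    h.eq_affine j hj1 hjN]
  ring

theorem slope_pos (h : IsAffineIFS N t a c L) {j : ℕ} (hj1 : 1 ≤ j) (hjN : j ≤ N) :
    0 < a j := by
  have hI : t 0 < t N := h.strictMonoOn (mem_Iic.2 (Nat.zero_le _)) (mem_Iic.2 le_rfl) h.pos
  have := h.slope_mul hj1 hjN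
  have := h.knot_pred_lt hj1 hjN
  nlinarith

theorem abs_map_sub (h : IsAffineIFS N t a c L) {j : ℕ} (hj1 : 1 ≤ j) (hjN : j ≤ N) (u z : ℝ) :
    |L j u - L j z| = a j * |u - z| := by
  rw [h.eq_affine j hj1 hjN, h.eq_affine j hj1 hjN,
    show a j * u + c j - (a j * z + c j) = a j * (u - z) by ring, abs_mul,
    abs_of_pos (h.slope_pos hj1 hjN)]

theorem image_Icc (h : IsAffineIFS N t a c L) {j : ℕ} (hj1 : 1 ≤ j) (hjN : j ≤ N) :
    L j '' Icc (t 0) (t N) = Icc (t (j - 1)) (t j) := by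
  have hL : L j = fun x => a j * x + c j := funext (h.eq_affine j hj1 hjN)
  rw [← h.map_left j hj1 hjN, ← h.map_right j hj1 hjN, hL]
  exact image_affine_Icc' (h.slope_pos hj1 hjN) _ _ _

theorem exists_mem_Icc (h : IsAffineIFS N t a c L) {x : ℝ} (hx : x ∈ Icc (t 0) (t N)) :
    ∃ j, 1 ≤ j ∧ j ≤ N ∧ x ∈ Icc (t (j - 1)) (t j) := by
  have key : ∀ k, 1 ≤ k → x ≤ t k → ∃ j, 1 ≤ j ∧ j ≤ k ∧ x ∈ Icc (t (j - 1)) (t j) := by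
    intro k hk hxk
    induction k, hk using Nat.le_induction with
    | base => exact ⟨1, le_rfl, le_rfl, hx.1, hxk⟩
    | succ k hk ih =>
      rcases le_or_gt x (t k) with hle | hlt
      · obtain ⟨j, hj1, hjk, hj⟩ := ih hle
        exact ⟨j, hj1, by omega, hj⟩
      · exact ⟨k + 1, by omega, le_rfl, hlt.le, hxk⟩
  exact key N h.pos hx.2

section Scales

variable {E : Type*} [PseudoMetricSpace E] {f : ℝ → E} {γ K M κ ρ Δ : ℝ}
  (h : IsAffineIFS N t a c L) (hγ : 0 ≤ γ) (hK : 0 ≤ K) (hκ0 : 0 ≤ κ)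
  (hκ : ∀ j, 1 ≤ j → j ≤ N → κ ≤ a j) (hκρ : κ ≤ ρ) (hΔ0 : 0 ≤ Δ) (hKM : K * Δ ≤ M * (ρ - γ))
  (hcontr : ∀ j, 1 ≤ j → j ≤ N → ∀ u ∈ Icc (t 0) (t N), ∀ z ∈ Icc (t 0) (t N),
    dist (f (L j u)) (f (L j z)) ≤ γ * dist (f u) (f z) + K * |u - z|)
include h hγ hK hκ0 hκ hκρ hΔ0 hKM hcontr

theorem dist_map_le_mul_pow {j : ℕ} (hj1 : 1 ≤ j) (hjN : j ≤ N) {u z : ℝ}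
    (hu : u ∈ Icc (t 0) (t N)) (hz : z ∈ Icc (t 0) (t N)) {n : ℕ}
    (hLuz : |L j u - L j z| ≤ κ ^ (n + 1) * Δ) {C : ℝ} (hC : 1 ≤ C)
    (ih : |u - z| ≤ κ ^ n * Δ → dist (f u) (f z) ≤ C * M * ρ ^ n) :
    dist (f (L j u)) (f (L j z)) ≤ C * M * ρ ^ (n + 1) := by
  have haj := h.slope_pos hj1 hjN
  have huz : |u - z| ≤ κ ^ n * Δ := by
    rw [h.abs_map_sub hj1 hjN, pow_succ'] at hLuz
    refine le_of_mul_le_mul_left (hLuz.trans ?_) haj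
    rw [mul_assoc]
    gcongr
    exact hκ j hj1 hjN
  -- the additive error `K |u - z|` of one pullback is absorbed by the gap between `γ` and `ρ`
  have hscale : K * (κ ^ n * Δ) ≤ C * (M * (ρ - γ)) * ρ ^ n := by
    calc K * (κ ^ n * Δ) ≤ K * Δ * ρ ^ n := by
          rw [mul_comm (κ ^ n), ← mul_assoc]; gcongr
      _ ≤ C * (M * (ρ - γ)) * ρ ^ n := by
          refine mul_le_mul_of_nonneg_right ?_ (pow_nonneg (hκ0.trans hκρ) n)
          exact hKM.trans (le_mul_of_one_le_left ((mul_nonneg hK hΔ0).trans hKM) hC)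
  calc dist (f (L j u)) (f (L j z)) ≤ γ * dist (f u) (f z) + K * |u - z| :=
        hcontr j hj1 hjN u hu z hz
    _ ≤ γ * (C * M * ρ ^ n) + K * (κ ^ n * Δ) := by gcongr; exact ih huz
    _ ≤ C * M * ρ ^ (n + 1) := by rw [pow_succ]; linarith

theorem dist_le_mul_pow_of_map_eq_self
    (hM : ∀ x ∈ Icc (t 0) (t N), ∀ y ∈ Icc (t 0) (t N), dist (f x) (f y) ≤ M)
    {j : ℕ} (hj1 : 1 ≤ j) (hjN : j ≤ N) {p : ℝ} (hp : p ∈ Icc (t 0) (t N)) (hLp : L j p = p)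
    (hcell : ∀ x ∈ Icc (t 0) (t N), |x - p| ≤ Δ → x ∈ Icc (t (j - 1)) (t j)) (n : ℕ) :
    ∀ x ∈ Icc (t 0) (t N), |x - p| ≤ κ ^ n * Δ → dist (f x) (f p) ≤ M * ρ ^ n := by
  induction n with
  | zero => intro x hx _; simpa using hM x hx p hp
  | succ n ih =>
    intro x hx hxp
    have hκ1 : κ ^ (n + 1) ≤ 1 :=
      pow_le_one₀ hκ0 ((hκ j hj1 hjN).trans (h.slope_lt_one j hj1 hjN).le)
    obtain ⟨u, hu, rfl⟩ : x ∈ L j '' Icc (t 0) (t N) :=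
      h.image_Icc hj1 hjN ▸ hcell x hx (hxp.trans (mul_le_of_le_one_left hΔ0 hκ1))
    rw [← hLp] at hxp ⊢
    simpa using h.dist_map_le_mul_pow hγ hK hκ0 hκ hκρ hΔ0 hKM hcontr hj1 hjN hu hp hxp le_rfl
      (by simpa using ih u hu)

theorem dist_le_mul_pow_left
    (hM : ∀ x ∈ Icc (t 0) (t N), ∀ y ∈ Icc (t 0) (t N), dist (f x) (f y) ≤ M)
    (hΔ : ∀ j, 1 ≤ j → j ≤ N → Δ ≤ t j - t (j - 1)) (n : ℕ) :
    ∀ x ∈ Icc (t 0) (t N), |x - t 0| ≤ κ ^ n * Δ → dist (f x) (f (t 0)) ≤ M * ρ ^ n :=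
  h.dist_le_mul_pow_of_map_eq_self hγ hK hκ0 hκ hκρ hΔ0 hKM hcontr hM le_rfl h.pos
    (h.knot_mem_Icc (Nat.zero_le N)) (h.map_left 1 le_rfl h.pos)
    (fun x hx hxp => ⟨hx.1, by linarith [(abs_le.1 hxp).2, hΔ 1 le_rfl h.pos]⟩) n

theorem dist_le_mul_pow_right
    (hM : ∀ x ∈ Icc (t 0) (t N), ∀ y ∈ Icc (t 0) (t N), dist (f x) (f y) ≤ M)
    (hΔ : ∀ j, 1 ≤ j → j ≤ N → Δ ≤ t j - t (j - 1)) (n : ℕ) :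
    ∀ x ∈ Icc (t 0) (t N), |x - t N| ≤ κ ^ n * Δ → dist (f x) (f (t N)) ≤ M * ρ ^ n :=
  h.dist_le_mul_pow_of_map_eq_self hγ hK hκ0 hκ hκρ hΔ0 hKM hcontr hM h.pos le_rfl
    (h.knot_mem_Icc le_rfl) (h.map_right N h.pos le_rfl)
    (fun x hx hxp => ⟨by linarith [(abs_le.1 hxp).1, hΔ N h.pos le_rfl], hx.2⟩) n

theorem dist_le_two_mul_pow_of_mem_adjacent
    (hM : ∀ x ∈ Icc (t 0) (t N), ∀ y ∈ Icc (t 0) (t N), dist (f x) (f y) ≤ M)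
    (hΔ : ∀ j, 1 ≤ j → j ≤ N → Δ ≤ t j - t (j - 1)) {m n : ℕ} (hm1 : 1 ≤ m) (hmN : m + 1 ≤ N)
    {x y : ℝ} (hx : x ∈ Icc (t (m - 1)) (t m)) (hy : y ∈ Icc (t m) (t (m + 1)))
    (hxy : y - x ≤ κ ^ (n + 1) * Δ) :
    dist (f x) (f y) ≤ 2 * M * ρ ^ (n + 1) := by
  obtain ⟨u, hu, rfl⟩ : x ∈ L m '' Icc (t 0) (t N) := h.image_Icc hm1 (by omega) ▸ hx
  obtain ⟨z, hz, rfl⟩ : y ∈ L (m + 1) '' Icc (t 0) (t N) :=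
    h.image_Icc (by omega) hmN ▸ by simpa using hy
  have hLm : L m (t N) = t m := h.map_right m hm1 (by omega)
  have hLm' : L (m + 1) (t 0) = t m := by simpa using h.map_left (m + 1) (by omega) hmN
  -- both halves of the pair, split at the knot `t m`, are endpoint pairs after pulling back
  have hx_tm : dist (f (L m u)) (f (t m)) ≤ 1 * M * ρ ^ (n + 1) := by
    rw [← hLm]
    refine h.dist_map_le_mul_pow hγ hK hκ0 hκ hκρ hΔ0 hKM hcontr hm1 (by omega) hu
      (h.knot_mem_Icc le_rfl) ?_ le_rfl
      (by simpa using h.dist_le_mul_pow_right hγ hK hκ0 hκ hκρ hΔ0 hKM hcontr hM hΔ n u hu)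
    rw [hLm]
    exact abs_sub_le_iff.2 ⟨by linarith [hx.2, hy.1], by linarith [hx.2, hy.1]⟩
  have htm_y : dist (f (t m)) (f (L (m + 1) z)) ≤ 1 * M * ρ ^ (n + 1) := by
    rw [dist_comm, ← hLm']
    refine h.dist_map_le_mul_pow hγ hK hκ0 hκ hκρ hΔ0 hKM hcontr (by omega) hmN hz
      (h.knot_mem_Icc (Nat.zero_le N)) ?_ le_rfl
      (by simpa using h.dist_le_mul_pow_left hγ hK hκ0 hκ hκρ hΔ0 hKM hcontr hM hΔ n z hz)
    rw [hLm']
    exact abs_sub_le_iff.2 ⟨by linarith [hx.2, hy.1], by linarith [hx.2, hy.1]⟩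
  linarith [dist_triangle (f (L m u)) (f (t m)) (f (L (m + 1) z))]

theorem dist_le_two_mul_pow
    (hM : ∀ x ∈ Icc (t 0) (t N), ∀ y ∈ Icc (t 0) (t N), dist (f x) (f y) ≤ M)
    (hΔ : ∀ j, 1 ≤ j → j ≤ N → Δ ≤ t j - t (j - 1)) (n : ℕ) :
    ∀ x ∈ Icc (t 0) (t N), ∀ y ∈ Icc (t 0) (t N), |x - y| ≤ κ ^ n * Δ →
      dist (f x) (f y) ≤ 2 * M * ρ ^ n := by
  induction n with
  | zero =>
    intro x hx y hy _
    have hxy := hM x hx y hy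
    linarith [dist_nonneg.trans hxy, pow_zero ρ]
  | succ n ih =>
    intro x hx y hy hd
    wlog hxy : x ≤ y generalizing x y
    · rw [dist_comm]; exact this y hy x hx (by rwa [abs_sub_comm]) (le_of_not_ge hxy)
    have hyx : y - x ≤ κ ^ (n + 1) * Δ := (abs_sub_le_iff.1 hd).2
    obtain ⟨m, hm1, hmN, hxm⟩ := h.exists_mem_Icc hx
    rcases le_or_gt y (t m) with hym | hmy
    · obtain ⟨u, hu, rfl⟩ : x ∈ L m '' Icc (t 0) (t N) := h.image_Icc hm1 hmN ▸ hxm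
      obtain ⟨z, hz, rfl⟩ : y ∈ L m '' Icc (t 0) (t N) :=
        h.image_Icc hm1 hmN ▸ ⟨hxm.1.trans hxy, hym⟩
      exact h.dist_map_le_mul_pow hγ hK hκ0 hκ hκρ hΔ0 hKM hcontr hm1 hmN hu hz hd one_le_two
        (ih u hu z hz)
    have hmN' : m + 1 ≤ N := lt_of_le_of_ne hmN fun hm => by subst hm; linarith [hy.2]
    have hκΔ : κ ^ (n + 1) * Δ ≤ Δ := mul_le_of_le_one_left hΔ0
      (pow_le_one₀ hκ0 ((hκ m hm1 hmN).trans (h.slope_lt_one m hm1 hmN).le))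
    have hgap : Δ ≤ t (m + 1) - t m := by simpa using hΔ (m + 1) (by omega) hmN'
    exact h.dist_le_two_mul_pow_of_mem_adjacent hγ hK hκ0 hκ hκρ hΔ0 hKM hcontr hM hΔ hm1 hmN'
      hxm ⟨hmy.le, by linarith [hxm.2]⟩ hyx

end Scales

theorem exists_dist_le_mul_rpow {E : Type*} [PseudoMetricSpace E] (h : IsAffineIFS N t a c L)
    {f : ℝ → E} {γ : ℝ} (hγ : γ < 1) (hf : IsBounded (f '' Icc (t 0) (t N)))
    (hcontr : ∀ j, 1 ≤ j → j ≤ N → ∃ K, ∀ u ∈ Icc (t 0) (t N), ∀ z ∈ Icc (t 0) (t N),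
      dist (f (L j u)) (f (L j z)) ≤ γ * dist (f u) (f z) + K * |u - z|) :
    ∃ α : ℝ, 0 < α ∧ α ≤ 1 ∧ ∃ C : ℝ, 0 < C ∧ ∀ x ∈ Icc (t 0) (t N), ∀ y ∈ Icc (t 0) (t N),
      dist (f x) (f y) ≤ C * |x - y| ^ α := by
  set γ' := max γ 0
  obtain ⟨K, hK0, hK⟩ := (Finset.Icc 1 N).exists_nonneg_forall_of_monotone
    (P := fun j K => ∀ u ∈ Icc (t 0) (t N), ∀ z ∈ Icc (t 0) (t N),
      dist (f (L j u)) (f (L j z)) ≤ γ' * dist (f u) (f z) + K * |u - z|)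
    (fun j _ K K' hKK' hK u hu z hz => (hK u hu z hz).trans (by gcongr))
    (fun j hj => (hcontr j (Finset.mem_Icc.1 hj).1 (Finset.mem_Icc.1 hj).2).imp
      fun K hK u hu z hz => (hK u hu z hz).trans (by gcongr; exact le_max_left _ _))
  obtain ⟨M₀, hM₀⟩ := Metric.isBounded_iff.1 hf
  have hne : (Finset.Icc 1 N).Nonempty := ⟨1, Finset.mem_Icc.2 ⟨le_rfl, h.pos⟩⟩
  obtain ⟨j₀, hj₀, hκ⟩ := Finset.exists_min_image _ a hne
  obtain ⟨j₁, hj₁, hΔ⟩ := Finset.exists_min_image _ (fun j => t j - t (j - 1)) hne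
  simp only [Finset.mem_Icc] at hj₀ hj₁ hκ hΔ hK
  set κ := a j₀
  set Δ := t j₁ - t (j₁ - 1)
  -- any `ρ` in `[κ, 1)` strictly above `γ'` works, and `M` is enlarged so that `K Δ ≤ M (ρ - γ')`
  set ρ := max κ ((1 + γ') / 2)
  set M := max M₀ (K * Δ / (ρ - γ'))
  have hκ0 : 0 < κ := h.slope_pos hj₀.1 hj₀.2
  have hκ1 : κ < 1 := h.slope_lt_one _ hj₀.1 hj₀.2
  have hΔ0 : 0 < Δ := sub_pos.2 (h.knot_pred_lt hj₁.1 hj₁.2)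
  have hρ1 : ρ < 1 := max_lt hκ1 (by linarith [max_lt hγ one_pos])
  have hγρ : 0 < ρ - γ' := sub_pos.2 (lt_max_of_lt_right (by linarith [max_lt hγ one_pos]))
  have hKM : K * Δ ≤ M * (ρ - γ') := (div_le_iff₀ hγρ).1 (le_max_right _ _)
  have hM0 : 0 ≤ M := nonneg_of_mul_nonneg_left ((mul_nonneg hK0 hΔ0.le).trans hKM) hγρ
  have hM : ∀ x ∈ Icc (t 0) (t N), ∀ y ∈ Icc (t 0) (t N), dist (f x) (f y) ≤ M :=
    fun x hx y hy => (hM₀ (mem_image_of_mem f hx) (mem_image_of_mem f hy)).trans (le_max_left _ _)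
  have hpow (n : ℕ) (x) (hx : x ∈ Icc (t 0) (t N)) (y) (hy : y ∈ Icc (t 0) (t N))
      (hd : dist x y ≤ κ ^ n * Δ) : dist (f x) (f y) ≤ 2 * M * ρ ^ n :=
    h.dist_le_two_mul_pow (le_max_right _ _) hK0 hκ0.le (fun j h1 h2 => hκ j ⟨h1, h2⟩)
      (le_max_left _ _) hΔ0.le hKM (fun j h1 h2 => hK j ⟨h1, h2⟩) hM
      (fun j h1 h2 => hΔ j ⟨h1, h2⟩) n x hx y hy (by rwa [Real.dist_eq] at hd)
  obtain ⟨α, hα0, hα1, C, hC0, hC⟩ := exists_dist_le_mul_rpow_of_dist_le_pow hΔ0 hκ0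
    (le_max_left _ _) hρ1 (fun x hx y hy => (hM x hx y hy).trans (by linarith)) hpow
  exact ⟨α, hα0, hα1, C, hC0, fun x hx y hy => by simpa [Real.dist_eq] using hC x hx y hy⟩

end IsAffineIFS

theorem meshCount_graph_le_card {g : ℝ → ℝ} {T₀ T₁ ε η : ℝ} (hT : T₀ ≤ T₁) (hε : 0 < ε)
    (hg : ∀ x ∈ Icc T₀ T₁, ∀ y ∈ Icc T₀ T₁, |x - y| ≤ ε → |g x - g y| ≤ η) :
    meshCount ((fun x => (x, g x)) '' Icc T₀ T₁) ε ≤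
      (Finset.Icc (⌈T₀ / ε⌉ - 1) ⌊T₁ / ε⌋).card *
        (Finset.Icc (-(⌈η / ε⌉ + 1)) (⌈η / ε⌉ + 1)).card := by
  set Q := ⌈η / ε⌉ + 1
  -- `ref m ∈ [T₀, T₁]` lies within `ε` of every graph point in column `m`, so the rows `n` met in
  -- that column are within `Q` of the row `k m` of `(ref m, g (ref m))`
  let ref : ℤ → ℝ := fun m => max T₀ (min (m * ε) T₁)
  let k : ℤ → ℤ := fun m => ⌊g (ref m) / ε⌋
  refine (ncard_le_ncard (t := (fun p : ℤ × ℤ => (p.1, k p.1 + p.2)) ''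
    ↑(Finset.Icc (⌈T₀ / ε⌉ - 1) ⌊T₁ / ε⌋ ×ˢ Finset.Icc (-Q) Q)) ?_
    ((Finset.finite_toSet _).image _)).trans ?_
  swap
  · refine (ncard_image_le (Finset.finite_toSet _)).trans_eq ?_
    rw [ncard_coe_finset, Finset.card_product]
  rintro ⟨m, n⟩ ⟨_, ⟨⟨hxm, hxm'⟩, hgn, hgn'⟩, x, hx, rfl⟩
  dsimp only at hxm hxm' hgn hgn'
  refine ⟨(m, n - k m), ?_, by simp⟩
  have href : ref m ∈ Icc T₀ T₁ := ⟨le_max_left _ _, max_le hT (min_le_right _ _)⟩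
  have hxref : |x - ref m| ≤ ε := by
    have h₁ : x - ε ≤ ref m :=
      le_max_of_le_right (le_min (by linarith) (by linarith [hx.2]))
    have h₂ : ref m ≤ x := max_le hx.1 ((min_le_left _ _).trans hxm)
    exact abs_sub_le_iff.2 ⟨by linarith, by linarith⟩
  have hgx := abs_sub_le_iff.1 (hg x hx _ href hxref)
  have hk := Int.floor_le (g (ref m) / ε)
  have hk' := Int.lt_floor_add_one (g (ref m) / ε)
  rw [le_div_iff₀ hε] at hk
  rw [div_lt_iff₀ hε] at hk'
  have hQ := Int.le_ceil (η / ε)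
  rw [div_le_iff₀ hε] at hQ
  simp only [Finset.coe_product, Finset.coe_Icc, mem_prod, mem_Icc]
  refine ⟨⟨?_, ?_⟩, ?_, ?_⟩
  · have : ⌈T₀ / ε⌉ ≤ m + 1 := Int.ceil_le.2 (by rw [div_le_iff₀ hε]; push_cast; linarith [hx.1])
    omega
  · exact Int.le_floor.2 ((le_div_iff₀ hε).2 (hxm.trans hx.2))
  · have : ((k m - n - 1 : ℤ) : ℝ) * ε ≤ (⌈η / ε⌉ : ℤ) * ε := by push_cast; linarith
    have : k m - n - 1 ≤ ⌈η / ε⌉ := by exact_mod_cast le_of_mul_le_mul_right this hε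
    omega
  · have : ((n - k m - 1 : ℤ) : ℝ) * ε < (⌈η / ε⌉ : ℤ) * ε := by push_cast; linarith
    have : n - k m - 1 < ⌈η / ε⌉ := by exact_mod_cast lt_of_mul_lt_mul_right this hε.le
    omega

theorem Int.natCast_toNat_le {z : ℤ} {r : ℝ} (hz : (z : ℝ) ≤ r) (hr : 0 ≤ r) :
    (z.toNat : ℝ) ≤ r := by
  rw [← Int.cast_natCast, Int.toNat_eq_max]
  push_cast
  exact max_le hz hr

theorem meshCount_graph_le {g : ℝ → ℝ} {T₀ T₁ ε η : ℝ} (hT : T₀ ≤ T₁) (hε : 0 < ε) (hη : 0 ≤ η)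
    (hg : ∀ x ∈ Icc T₀ T₁, ∀ y ∈ Icc T₀ T₁, |x - y| ≤ ε → |g x - g y| ≤ η) :
    (meshCount ((fun x => (x, g x)) '' Icc T₀ T₁) ε : ℝ) ≤
      ((T₁ - T₀) / ε + 2) * (2 * (η / ε) + 5) := by
  have hcard := meshCount_graph_le_card hT hε hg
  rw [Int.card_Icc, Int.card_Icc] at hcard
  have hcols : ((⌊T₁ / ε⌋ + 1 - (⌈T₀ / ε⌉ - 1) : ℤ) : ℝ) ≤ (T₁ - T₀) / ε + 2 := by
    push_cast
    linarith [Int.floor_le (T₁ / ε), Int.le_ceil (T₀ / ε), sub_div T₁ T₀ ε]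
  have hrows : ((⌈η / ε⌉ + 1 + 1 - -(⌈η / ε⌉ + 1) : ℤ) : ℝ) ≤ 2 * (η / ε) + 5 := by
    push_cast
    linarith [Int.ceil_lt_add_one (η / ε)]
  calc (meshCount ((fun x => (x, g x)) '' Icc T₀ T₁) ε : ℝ)
      ≤ ((⌊T₁ / ε⌋ + 1 - (⌈T₀ / ε⌉ - 1)).toNat : ℝ) *
        ((⌈η / ε⌉ + 1 + 1 - -(⌈η / ε⌉ + 1)).toNat : ℝ) := by exact_mod_cast hcard
    _ ≤ _ := by
      have hdiff : 0 ≤ (T₁ - T₀) / ε := div_nonneg (sub_nonneg.2 hT) hε.le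
      gcongr
      · exact Int.natCast_toNat_le hcols (by linarith)
      · exact Int.natCast_toNat_le hrows (by positivity)

theorem meshCount_graph_le_of_holder {g : ℝ → ℝ} {T₀ T₁ C α ε : ℝ} (hT : T₀ ≤ T₁) (hC : 0 ≤ C)
    (hα : 0 < α) (hα1 : α ≤ 1)
    (hg : ∀ x ∈ Icc T₀ T₁, ∀ y ∈ Icc T₀ T₁, |g x - g y| ≤ C * |x - y| ^ α)
    (hε : 0 < ε) (hε1 : ε ≤ 1) :
    (meshCount ((fun x => (x, g x)) '' Icc T₀ T₁) ε : ℝ) ≤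
      (T₁ - T₀ + 2) * (2 * C + 5) * ε ^ (-(2 - α)) := by
  refine (meshCount_graph_le (η := C * ε ^ α) hT hε (by positivity) fun x hx y hy hxy =>
    (hg x hx y hy).trans (by gcongr)).trans ?_
  have hpow : ε ^ α / ε = ε ^ (α - 1) := by rw [rpow_sub hε, rpow_one]
  have hone : 1 ≤ ε ^ (α - 1) := one_le_rpow_of_pos_of_le_one_of_nonpos hε hε1 (by linarith)
  have hsplit : ε ^ (-(2 - α)) = ε ^ (α - 1) / ε := by
    rw [← rpow_sub_one hε.ne']; ring_nf
  rw [mul_div_assoc, hpow, hsplit]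
  have h₁ : (T₁ - T₀) / ε + 2 ≤ (T₁ - T₀ + 2) / ε := by
    rw [add_div]; gcongr; exact le_div_self zero_le_two hε hε1
  have h₂ : 2 * (C * ε ^ (α - 1)) + 5 ≤ (2 * C + 5) * ε ^ (α - 1) := by nlinarith
  calc ((T₁ - T₀) / ε + 2) * (2 * (C * ε ^ (α - 1)) + 5)
      ≤ (T₁ - T₀ + 2) / ε * ((2 * C + 5) * ε ^ (α - 1)) := by
        gcongr
    _ = _ := by ring

theorem limsup_log_div_neg_log_le {n : ℝ → ℕ} {A s : ℝ} (hA : 1 ≤ A) (hs : 0 ≤ s)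
    (h : ∀ ε ∈ Ioo 0 1, (n ε : ℝ) ≤ A * ε ^ (-s)) :
    limsup (fun ε => log (n ε) / -log ε) (𝓝[>] 0) ≤ s := by
  have hIoo : Ioo (0 : ℝ) 1 ∈ 𝓝[>] 0 := Ioo_mem_nhdsGT one_pos
  have hlog : ∀ ε ∈ Ioo (0 : ℝ) 1, 0 < -log ε := fun ε hε => neg_pos.2 (log_neg hε.1 hε.2)
  have hbound : ∀ ε ∈ Ioo (0 : ℝ) 1, log (n ε) / -log ε ≤ s + log A / -log ε := by
    intro ε hε
    rw [div_le_iff₀ (hlog ε hε), add_mul, div_mul_cancel₀ _ (hlog ε hε).ne']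
    rcases Nat.eq_zero_or_pos (n ε) with hn | hn
    · rw [hn, Nat.cast_zero, log_zero]
      nlinarith [log_nonneg hA, hlog ε hε]
    · calc log (n ε) ≤ log (A * ε ^ (-s)) := log_le_log (by exact_mod_cast hn) (h ε hε)
        _ = s * -log ε + log A := by
          rw [log_mul (by positivity) (rpow_pos_of_pos hε.1 _).ne', log_rpow hε.1]; ring
  have htend : Tendsto (fun ε => s + log A / -log ε) (𝓝[>] 0) (𝓝 s) := by
    simpa using tendsto_const_nhds.add (tendsto_const_nhds.div_atTop
      (tendsto_neg_atBot_atTop.comp tendsto_log_nhdsGT_zero))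
  calc limsup (fun ε => log (n ε) / -log ε) (𝓝[>] 0)
      ≤ limsup (fun ε => s + log A / -log ε) (𝓝[>] 0) :=
        limsup_le_limsup (eventually_of_mem hIoo hbound)
          (isCoboundedUnder_le_of_eventually_le _ (eventually_of_mem hIoo fun ε hε =>
            div_nonneg (log_natCast_nonneg _) (hlog ε hε).le))
          htend.isBoundedUnder_le
    _ = s := htend.limsup_eq

theorem lipschitzWith_one_of_abs_sub_lt {s : ℝ → ℝ} (hs : ∀ x y, x ≠ y → |s x - s y| < |x - y|) :
    LipschitzWith 1 s :=
  LipschitzWith.of_dist_le_mul fun x y => by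
    rcases eq_or_ne x y with rfl | hxy
    · simp
    · simpa [Real.dist_eq] using (hs x y hxy).le

theorem abs_mul_add_mul_add_sub_le (β κ θ β' κ' θ' S R S' R' : ℝ) :
    |(β * S + κ * R + θ) - (β' * S' + κ' * R' + θ')| ≤
      (|β| + |κ|) * max |S - S'| |R - R'| + (|β - β'| * |S'| + |κ - κ'| * |R'| + |θ - θ'|) := by
  have hsplit : (β * S + κ * R + θ) - (β' * S' + κ' * R' + θ') =
      β * (S - S') + κ * (R - R') + ((β - β') * S' + (κ - κ') * R' + (θ - θ')) := by ring
  rw [hsplit]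
  refine (abs_add_three _ _ _).trans ?_
  rw [abs_mul, abs_mul, add_mul]
  gcongr
  · exact le_max_left _ _
  · exact le_max_right _ _
  · refine (abs_add_three _ _ _).trans ?_
    rw [abs_mul, abs_mul]

theorem abs_row_sub_le {T : Set ℝ} {β κ θ s r : ℝ → ℝ} {Kβ Kκ Kθ : ℝ≥0}
    (hβ : LipschitzOnWith Kβ β T) (hκ : LipschitzOnWith Kκ κ T) (hθ : LipschitzOnWith Kθ θ T)
    (hs : LipschitzWith 1 s) (hr : LipschitzWith 1 r) {u z B : ℝ} (hu : u ∈ T) (hz : z ∈ T)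
    (P Q : ℝ × ℝ) (hQs : |s Q.1| ≤ B) (hQr : |r Q.2| ≤ B) :
    |(β u * s P.1 + κ u * r P.2 + θ u) - (β z * s Q.1 + κ z * r Q.2 + θ z)| ≤
      (|β u| + |κ u|) * dist P Q + ((Kβ + Kκ) * B + Kθ) * |u - z| := by
  have hlip {φ : ℝ → ℝ} {K : ℝ≥0} (hφ : LipschitzOnWith K φ T) : |φ u - φ z| ≤ K * |u - z| := by
    simpa [Real.dist_eq] using hφ.dist_le_mul u hu z hz
  have hPQ : max |s P.1 - s Q.1| |r P.2 - r Q.2| ≤ dist P Q := by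
    rw [Prod.dist_eq]
    refine max_le_max ?_ ?_
    · simpa [Real.dist_eq] using hs.dist_le_mul P.1 Q.1
    · simpa [Real.dist_eq] using hr.dist_le_mul P.2 Q.2
  have hB : 0 ≤ B := (abs_nonneg _).trans hQs
  refine (abs_mul_add_mul_add_sub_le _ _ _ _ _ _ _ _ _ _).trans ?_
  calc (|β u| + |κ u|) * max |s P.1 - s Q.1| |r P.2 - r Q.2| +
        (|β u - β z| * |s Q.1| + |κ u - κ z| * |r Q.2| + |θ u - θ z|)
      ≤ (|β u| + |κ u|) * dist P Q +
        (Kβ * |u - z| * B + Kκ * |u - z| * B + Kθ * |u - z|) := by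
        gcongr
        exacts [hlip hβ, hlip hκ, hlip hθ]
    _ = _ := by ring

def edelsteinMap (b c d e p q s r : ℝ → ℝ) (x : ℝ) (P : ℝ × ℝ) : ℝ × ℝ :=
  (b x * s P.1 + c x * r P.2 + p x, d x * s P.1 + e x * r P.2 + q x)

theorem exists_dist_edelsteinMap_le {T : Set ℝ} {b c d e p q s r : ℝ → ℝ} {g : ℝ → ℝ × ℝ}
    {γ : ℝ} (hLip : ∀ φ ∈ ([b, c, d, e, p, q] : List (ℝ → ℝ)), ∃ K : ℝ≥0, LipschitzOnWith K φ T)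
    (hs : LipschitzWith 1 s) (hr : LipschitzWith 1 r)
    (hbc : ∀ x ∈ T, |b x| + |c x| ≤ γ) (hde : ∀ x ∈ T, |d x| + |e x| ≤ γ)
    (hg : IsBounded (g '' T)) :
    ∃ K, ∀ u ∈ T, ∀ z ∈ T, dist (edelsteinMap b c d e p q s r u (g u))
      (edelsteinMap b c d e p q s r z (g z)) ≤ γ * dist (g u) (g z) + K * |u - z| := by
  obtain ⟨Kb, hb⟩ := hLip b (by simp)
  obtain ⟨Kc, hc⟩ := hLip c (by simp)
  obtain ⟨Kd, hd⟩ := hLip d (by simp)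
  obtain ⟨Ke, he⟩ := hLip e (by simp)
  obtain ⟨Kp, hp⟩ := hLip p (by simp)
  obtain ⟨Kq, hq⟩ := hLip q (by simp)
  obtain ⟨R, hR⟩ := isBounded_iff_forall_norm_le.1 hg
  have hφ_le {φ : ℝ → ℝ} (hφ : LipschitzWith 1 φ) (v : ℝ) : |φ v| ≤ |φ 0| + |v| := by
    have := hφ.dist_le_mul v 0
    simp only [Real.dist_eq, NNReal.coe_one, one_mul, sub_zero] at this
    linarith [abs_sub_abs_le_abs_sub (φ v) (φ 0)]
  have hgR {z : ℝ} (hz : z ∈ T) : ‖g z‖ ≤ R := hR _ (mem_image_of_mem g hz)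
  set B := |s 0| + |r 0| + R
  have hsB {z : ℝ} (hz : z ∈ T) : |s (g z).1| ≤ B := by
    linarith [hφ_le hs (g z).1, abs_nonneg (r 0), (norm_fst_le (g z)).trans (hgR hz),
      Real.norm_eq_abs (g z).1]
  have hrB {z : ℝ} (hz : z ∈ T) : |r (g z).2| ≤ B := by
    linarith [hφ_le hr (g z).2, abs_nonneg (s 0), (norm_snd_le (g z)).trans (hgR hz),
      Real.norm_eq_abs (g z).2]
  refine ⟨max ((Kb + Kc) * B + Kp) ((Kd + Ke) * B + Kq), fun u hu z hz => ?_⟩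
  rw [Prod.dist_eq, Real.dist_eq, Real.dist_eq]
  refine max_le ?_ ?_
  · refine (abs_row_sub_le hb hc hp hs hr hu hz _ _ (hsB hz) (hrB hz)).trans ?_
    gcongr
    · exact hbc u hu
    · exact le_max_left _ _
  · refine (abs_row_sub_le hd he hq hs hr hu hz _ _ (hsB hz) (hrB hz)).trans ?_
    gcongr
    · exact hde u hu
    · exact le_max_right _ _

theorem EHVFIF_box_dimension_general
    (N : ℕ) (hN : 0 < N)
    (t : ℕ → ℝ)
    (htmono : ∀ j, j < N → t j < t (j + 1))
    (a fc : ℕ → ℝ) (L : ℕ → ℝ → ℝ)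
    (hL : ∀ j, 1 ≤ j → j ≤ N → ∀ x : ℝ, L j x = a j * x + fc j)
    (ha : ∀ j, 1 ≤ j → j ≤ N → a j ≠ 0 ∧ |a j| < 1)
    (hL0 : ∀ j, 1 ≤ j → j ≤ N → L j (t 0) = t (j - 1))
    (hLN : ∀ j, 1 ≤ j → j ≤ N → L j (t N) = t j)
    (b c d e p q : ℕ → ℝ → ℝ)
    (hLip : ∀ j, 1 ≤ j → j ≤ N → ∀ g ∈ ([b j, c j, d j, e j, p j, q j] : List (ℝ → ℝ)),
      ∃ Kg : NNReal, LipschitzOnWith Kg g (Set.Icc (t 0) (t N)))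
    (s r : ℕ → ℝ → ℝ)
    (hs : ∀ j, 1 ≤ j → j ≤ N → ∀ x y : ℝ, x ≠ y → |s j x - s j y| < |x - y|)
    (hr : ∀ j, 1 ≤ j → j ≤ N → ∀ x y : ℝ, x ≠ y → |r j x - r j y| < |x - y|)
    (F : ℕ → ℝ → ℝ × ℝ → ℝ × ℝ)
    (hF : ∀ j x vw, F j x vw = (b j x * s j vw.1 + c j x * r j vw.2 + p j x,
                                d j x * s j vw.1 + e j x * r j vw.2 + q j x))
    (hbc : ∃ γ : ℝ, γ < 1 ∧ ∀ j, 1 ≤ j → j ≤ N → ∀ x ∈ Set.Icc (t 0) (t N),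
      |b j x| + |c j x| ≤ γ)
    (hde : ∃ γ : ℝ, γ < 1 ∧ ∀ j, 1 ≤ j → j ≤ N → ∀ x ∈ Set.Icc (t 0) (t N),
      |d j x| + |e j x| ≤ γ)
    (f : ℝ → ℝ × ℝ) (hfc : ContinuousOn f (Set.Icc (t 0) (t N)))
    (hfe : ∀ j, 1 ≤ j → j ≤ N → ∀ x ∈ Set.Icc (t 0) (t N), f (L j x) = F j x (f x))
    :
    ∃ α : ℝ, 0 < α ∧ α ≤ 1 ∧
      (∃ C : ℝ, 0 < C ∧ ∀ x ∈ Set.Icc (t 0) (t N), ∀ y ∈ Set.Icc (t 0) (t N),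
        |(f x).1 - (f y).1| ≤ C * |x - y| ^ α) ∧
      Filter.limsup
        (fun ε : ℝ =>
          Real.log (meshCount ((fun x => (x, (f x).1)) '' Set.Icc (t 0) (t N)) ε) /
            (-Real.log ε))
        (nhdsWithin 0 (Set.Ioi 0)) ≤ 2 - α := by
  have hIFS : IsAffineIFS N t a fc L :=
    ⟨hN, htmono, hL, fun j h1 h2 => (le_abs_self _).trans_lt (ha j h1 h2).2, hL0, hLN⟩
  obtain ⟨γ₁, hγ₁, hbc⟩ := hbc
  obtain ⟨γ₂, hγ₂, hde⟩ := hde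
  have hbdd : IsBounded (f '' Icc (t 0) (t N)) :=
    (isCompact_Icc.image_of_continuousOn hfc).isBounded
  have hcontr : ∀ j, 1 ≤ j → j ≤ N → ∃ K, ∀ u ∈ Icc (t 0) (t N), ∀ z ∈ Icc (t 0) (t N),
      dist (f (L j u)) (f (L j z)) ≤ max γ₁ γ₂ * dist (f u) (f z) + K * |u - z| := by
    intro j h1 h2
    obtain ⟨K, hK⟩ := exists_dist_edelsteinMap_le (hLip j h1 h2)
      (lipschitzWith_one_of_abs_sub_lt (hs j h1 h2)) (lipschitzWith_one_of_abs_sub_lt (hr j h1 h2))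
      (fun x hx => (hbc j h1 h2 x hx).trans (le_max_left _ _))
      (fun x hx => (hde j h1 h2 x hx).trans (le_max_right _ _)) hbdd
    refine ⟨K, fun u hu z hz => ?_⟩
    rw [hfe j h1 h2 u hu, hfe j h1 h2 z hz, hF, hF]
    exact hK u hu z hz
  obtain ⟨α, hα0, hα1, C, hC0, hC⟩ := hIFS.exists_dist_le_mul_rpow (max_lt hγ₁ hγ₂) hbdd hcontr
  have hC₁ : ∀ x ∈ Icc (t 0) (t N), ∀ y ∈ Icc (t 0) (t N),
      |(f x).1 - (f y).1| ≤ C * |x - y| ^ α := fun x hx y hy => by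
    rw [← Real.dist_eq]
    exact ((le_max_left _ _).trans_eq Prod.dist_eq.symm).trans (hC x hx y hy)
  have hT : t 0 ≤ t N := (hIFS.knot_mem_Icc le_rfl).1
  refine ⟨α, hα0, hα1, ⟨C, hC0, hC₁⟩, limsup_log_div_neg_log_le ?_ (by linarith) fun ε hε =>
    meshCount_graph_le_of_holder hT hC0.le hα0 hα1 hC₁ hε.1 hε.2.le⟩
  nlinarith

/-- Under `max_j (‖b j‖∞ + ‖c j‖∞) < 1` and `max_j (‖d j‖∞ + ‖e j‖∞) < 1`, the graph
of the EHVFIF `f₁` has upper box-counting dimension at most `2 - α`, where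
`α ∈ (0,1]` is the Hölder exponent of `f₁` obtained from the smoothness theorem. -/
theorem EHVFIF_box_dimension
    (N : ℕ) (hN : 0 < N)
    (t v w : ℕ → ℝ)
    (htmono : ∀ j, j < N → t j < t (j + 1))
    (a fc : ℕ → ℝ) (L : ℕ → ℝ → ℝ)
    (hL : ∀ j, 1 ≤ j → j ≤ N → ∀ x : ℝ, L j x = a j * x + fc j)
    (ha : ∀ j, 1 ≤ j → j ≤ N → a j ≠ 0 ∧ |a j| < 1)
    (hL0 : ∀ j, 1 ≤ j → j ≤ N → L j (t 0) = t (j - 1))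
    (hLN : ∀ j, 1 ≤ j → j ≤ N → L j (t N) = t j)
    (b c d e p q : ℕ → ℝ → ℝ)
    (hLip : ∀ j, 1 ≤ j → j ≤ N → ∀ g ∈ ([b j, c j, d j, e j, p j, q j] : List (ℝ → ℝ)),
      ∃ Kg : NNReal, LipschitzOnWith Kg g (Set.Icc (t 0) (t N)))
    (hbd : ∀ j, 1 ≤ j → j ≤ N → ∃ B D : ℝ, B + D ≤ 1 ∧
      (∀ x ∈ Set.Icc (t 0) (t N), |b j x| ≤ B) ∧ (∀ x ∈ Set.Icc (t 0) (t N), |d j x| ≤ D))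
    (hce : ∀ j, 1 ≤ j → j ≤ N → ∃ C E : ℝ, C + E ≤ 1 ∧
      (∀ x ∈ Set.Icc (t 0) (t N), |c j x| ≤ C) ∧ (∀ x ∈ Set.Icc (t 0) (t N), |e j x| ≤ E))
    (s r : ℕ → ℝ → ℝ)
    (hs : ∀ j, 1 ≤ j → j ≤ N → ∀ x y : ℝ, x ≠ y → |s j x - s j y| < |x - y|)
    (hr : ∀ j, 1 ≤ j → j ≤ N → ∀ x y : ℝ, x ≠ y → |r j x - r j y| < |x - y|)
    (F : ℕ → ℝ → ℝ × ℝ → ℝ × ℝ)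
    (hF : ∀ j x vw, F j x vw = (b j x * s j vw.1 + c j x * r j vw.2 + p j x,
                                d j x * s j vw.1 + e j x * r j vw.2 + q j x))
    (hF0 : ∀ j, 1 ≤ j → j ≤ N → F j (t 0) (v 0, w 0) = (v (j - 1), w (j - 1)))
    (hFN : ∀ j, 1 ≤ j → j ≤ N → F j (t N) (v N, w N) = (v j, w j))
    (hbc : ∃ γ : ℝ, γ < 1 ∧ ∀ j, 1 ≤ j → j ≤ N → ∀ x ∈ Set.Icc (t 0) (t N),
      |b j x| + |c j x| ≤ γ)
    (hde : ∃ γ : ℝ, γ < 1 ∧ ∀ j, 1 ≤ j → j ≤ N → ∀ x ∈ Set.Icc (t 0) (t N),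
      |d j x| + |e j x| ≤ γ)
    (f : ℝ → ℝ × ℝ) (hfc : ContinuousOn f (Set.Icc (t 0) (t N)))
    (hfe : ∀ j, 1 ≤ j → j ≤ N → ∀ x ∈ Set.Icc (t 0) (t N), f (L j x) = F j x (f x))
    (hfi : ∀ j, j ≤ N → f (t j) = (v j, w j))
    :
    ∃ α : ℝ, 0 < α ∧ α ≤ 1 ∧
      (∃ C : ℝ, 0 < C ∧ ∀ x ∈ Set.Icc (t 0) (t N), ∀ y ∈ Set.Icc (t 0) (t N),
        |(f x).1 - (f y).1| ≤ C * |x - y| ^ α) ∧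
      Filter.limsup
        (fun ε : ℝ =>
          Real.log (meshCount ((fun x => (x, (f x).1)) '' Set.Icc (t 0) (t N)) ε) /
            (-Real.log ε))
        (nhdsWithin 0 (Set.Ioi 0)) ≤ 2 - α :=
  EHVFIF_box_dimension_general N hN t htmono a fc L hL ha hL0 hLN b c d e p q hLip s r hs hr F hF
    hbc hde f hfc hfe
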